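/- arXiv:1904.01185 — 3 statements merged into one kernel-verified Lean document; each statement's English description precedes it below -/
import Mathlib

section
/- The sequence q_0 = 1, q_{k+1} = 1 + ρq_k/(1 + ρq_k·c) converges to the unique positive fixed point Q* = (1/2)(1 - (1-ρ)/(ρc) + √((1 - (1-ρ)/(ρc))² + 4/(ρc))). -/
/-!
The map `x ↦ 1 + ρx/(1 + ρxc)` is increasing on `[0, ∞)`, takes values in `[1, 1 + 1/c]` there,
and moves `q₀ = 1` upwards, so `(q_k)` is increasing and bounded and converges to some `L ≥ 1`.
By continuity `L` is a fixed point, hence the positive root of `L² = (1 - (1-ρ)/(ρc)) L + 1/(ρc)`,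
which is `Q*`.
-/

open Filter Set Topology Function

theorem Monotone.of_monotoneOn_of_succ_eq {α : Type*} [Preorder α] {f : α → α} {s : Set α}
    (hf : MonotoneOn f s) (hs : MapsTo f s s) {q : ℕ → α} (hrec : ∀ k, q (k + 1) = f (q k))
    (h0 : q 0 ∈ s) (h01 : q 0 ≤ q 1) : Monotone q := by
  have hmem : ∀ k, q k ∈ s := by
    intro k
    induction k with
    | zero => exact h0
    | succ k ih => rw [hrec]; exact hs ih
  refine monotone_nat_of_le_succ fun k => ?_
  induction k with
  | zero => exact h01
  | succ k ih =>
    rw [hrec k, hrec (k + 1)]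
    exact hf (hmem k) (hmem (k + 1)) ih

theorem Filter.Tendsto.isFixedPt_of_succ_eq {X : Type*} [TopologicalSpace X] [T2Space X]
    {f : X → X} {q : ℕ → X} {L : X} (hq : Tendsto q atTop (𝓝 L))
    (hrec : ∀ k, q (k + 1) = f (q k)) (hf : ContinuousAt f L) : IsFixedPt f L := by
  have hshift : Tendsto (fun k => f (q k)) atTop (𝓝 L) := by
    simpa only [comp_def, hrec] using hq.comp (tendsto_add_atTop_nat 1)
  exact tendsto_nhds_unique (hf.tendsto.comp hq) hshift

theorem eq_half_add_sqrt_of_sq_eq {A B x : ℝ} (hB : 0 ≤ B) (hx : 0 < x)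
    (h : x ^ 2 = A * x + B) : x = (1 / 2) * (A + √(A ^ 2 + 4 * B)) := by
  have hroot : √(A ^ 2 + 4 * B) = 2 * x - A := by
    rw [Real.sqrt_eq_iff_mul_self_eq] <;> nlinarith
  rw [hroot]
  ring

noncomputable def qStep (ρ c x : ℝ) : ℝ := 1 + ρ * x / (1 + ρ * x * c)

section qStep

variable {ρ c : ℝ}

theorem one_le_qStep (hρ : 0 ≤ ρ) (hc : 0 ≤ c) {x : ℝ} (hx : 0 ≤ x) : 1 ≤ qStep ρ c x := by
  unfold qStep
  have : 0 ≤ ρ * x / (1 + ρ * x * c) := by positivity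
  linarith

theorem qStep_le (hρ : 0 ≤ ρ) (hc : 0 < c) {x : ℝ} (hx : 0 ≤ x) : qStep ρ c x ≤ 1 + 1 / c := by
  unfold qStep
  have hρx : 0 ≤ ρ * x := mul_nonneg hρ hx
  have : ρ * x / (1 + ρ * x * c) ≤ 1 / c := by
    rw [div_le_div_iff₀ (by positivity) hc]
    nlinarith
  linarith

theorem monotoneOn_qStep (hρ : 0 ≤ ρ) (hc : 0 ≤ c) : MonotoneOn (qStep ρ c) (Ici 0) := by
  intro x hx y hy hxy
  have hρx : 0 ≤ ρ * x := mul_nonneg hρ hx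
  have hρy : 0 ≤ ρ * y := mul_nonneg hρ hy
  unfold qStep
  gcongr 1 + ?_
  rw [div_le_div_iff₀ (by positivity) (by positivity)]
  nlinarith [mul_le_mul_of_nonneg_left hxy hρ]

theorem continuousAt_qStep (hρ : 0 ≤ ρ) (hc : 0 ≤ c) {x : ℝ} (hx : 0 ≤ x) :
    ContinuousAt (qStep ρ c) x := by
  have hden : 1 + ρ * x * c ≠ 0 := by positivity
  unfold qStep
  fun_prop (disch := exact hden)

theorem sq_eq_of_isFixedPt_qStep (hρ : 0 < ρ) (hc : 0 < c) {x : ℝ} (hx : 0 ≤ x)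
    (hfix : IsFixedPt (qStep ρ c) x) :
    x ^ 2 = (1 - (1 - ρ) / (ρ * c)) * x + 1 / (ρ * c) := by
  have hden : 1 + ρ * x * c ≠ 0 := by positivity
  unfold IsFixedPt qStep at hfix
  field_simp at hfix ⊢
  linear_combination (-1 : ℝ) * hfix

end qStep

theorem stmt_4 (ρ c : ℝ) (hρ : ρ ∈ Set.Ioo (0:ℝ) 1) (hc : 0 < c)
    (q : ℕ → ℝ) (h0 : q 0 = 1)
    (hrec : ∀ k, q (k+1) = 1 + ρ * q k / (1 + ρ * q k * c)) :
    Filter.Tendsto q Filter.atTop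
      (nhds ((1/2) * (1 - (1-ρ)/(ρ*c) + Real.sqrt ((1 - (1-ρ)/(ρ*c))^2 + 4/(ρ*c))))) := by
  have hρ0 : 0 < ρ := hρ.1
  have hrec' : ∀ k, q (k + 1) = qStep ρ c (q k) := hrec
  have hmaps : MapsTo (qStep ρ c) (Ici 0) (Ici 0) := fun x hx =>
    zero_le_one.trans (one_le_qStep hρ0.le hc.le hx)
  have hmono : Monotone q :=
    .of_monotoneOn_of_succ_eq (monotoneOn_qStep hρ0.le hc.le) hmaps hrec'
      (by simp [h0]) (by rw [hrec', h0]; exact one_le_qStep hρ0.le hc.le zero_le_one)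
  have hone_le : ∀ k, 1 ≤ q k := fun k => h0 ▸ hmono k.zero_le
  have hbdd : BddAbove (range q) := ⟨1 + 1 / c, forall_mem_range.2 fun k =>
    (hmono k.le_succ).trans (hrec' k ▸ qStep_le hρ0.le hc (zero_le_one.trans (hone_le k)))⟩
  have htend := tendsto_atTop_ciSup hmono hbdd
  have hL : 1 ≤ ⨆ k, q k := (hone_le 0).trans (le_ciSup hbdd 0)
  have hfix := htend.isFixedPt_of_succ_eq hrec' (continuousAt_qStep hρ0.le hc.le (by linarith))
  have hsq := sq_eq_of_isFixedPt_qStep hρ0 hc (by linarith) hfix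
  convert htend using 2
  rw [eq_half_add_sqrt_of_sq_eq (by positivity) (by linarith) hsq, mul_one_div]
end

section
/- Under the steady-state relations for Q and M, the limiting price p∞ = (ρM(δ+1) + 2ρ(δ+1)Q(A∞ + 1))/(2 + 2ρQ·α(δ+1)²/b), where A∞ is the limiting expected age, equals b/(α(δ+1)). -/
/-!
Write `c = α(δ+1)²/b` and `x = ρQc`. Clearing denominators, the fixed-point equation for `A∞`
says `2ρQc·A∞ = 2 - ρMc`; in particular `x ≠ 0`, since for `x = 0` it would read `A∞ = A∞ + 1`.
Substituting `2ρQA∞ = 2/c - ρM` into the numerator of `p∞`, the terms in `M` cancel and the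
numerator becomes `(δ+1)(2/c)(1 + x)`, so `p∞ = (δ+1)/c = b/(α(δ+1))`.
-/

lemma two_mul_mul_eq_sub_of_eq_div_add_div {A x y : ℝ} (hx : 1 + x ≠ 0)
    (h : A = A / (1 + x) + (2 - y) / (2 + 2 * x)) : 2 * (A * x) = 2 - y := by
  have hx2 : 2 + 2 * x ≠ 0 := by
    rw [show 2 + 2 * x = 2 * (1 + x) by ring]
    exact mul_ne_zero two_ne_zero hx
  field_simp at h
  linear_combination h

lemma div_eq_div_of_two_mul_mul_eq_sub {ρ Q M A c d : ℝ} (hc : c ≠ 0)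
    (hx : 1 + ρ * Q * c ≠ 0) (hA : 2 * (A * (ρ * Q * c)) = 2 - ρ * M * c) :
    (ρ * M * d + 2 * ρ * d * Q * (A + 1)) / (2 + 2 * ρ * Q * c) = d / c := by
  have hx2 : 2 + 2 * ρ * Q * c ≠ 0 := by
    rw [show 2 + 2 * ρ * Q * c = 2 * (1 + ρ * Q * c) by ring]
    exact mul_ne_zero two_ne_zero hx
  rw [div_eq_div_iff hx2 hc]
  linear_combination d * hA

theorem stmt_10_general (ρ α b δ Q M Ainf : ℝ) (hρ : ρ ∈ Set.Ioo (0:ℝ) 1)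
    (hα : α ∈ Set.Ioc (0:ℝ) 1) (hb : 0 < b) (hQ : 0 < Q)
    (hA : Ainf = Ainf / (1 + ρ*Q*(α*(δ+1)^2/b))
      + (2 - ρ*M*(α*(δ+1)^2/b)) / (2 + 2*ρ*Q*(α*(δ+1)^2/b))) :
    (ρ*M*(δ+1) + 2*ρ*(δ+1)*Q*(Ainf + 1)) / (2 + 2*ρ*Q*(α*(δ+1)^2/b))
      = b / (α*(δ+1)) := by
  set c := α * (δ + 1) ^ 2 / b with hc_def
  have hx : 1 + ρ * Q * c ≠ 0 := by
    have : 0 ≤ c := by have := hα.1; positivity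
    have := hρ.1
    positivity
  have hA' : 2 * (Ainf * (ρ * Q * c)) = 2 - ρ * M * c :=
    two_mul_mul_eq_sub_of_eq_div_add_div hx (by convert hA using 3; ring)
  have hc : c ≠ 0 := by
    rintro hc0
    simp [hc0] at hA'
  have hδ : δ + 1 ≠ 0 := by
    rintro hδ0
    simp [hc_def, hδ0] at hc
  rw [div_eq_div_of_two_mul_mul_eq_sub hc hx hA', hc_def]
  field_simp [hα.1.ne', hb.ne']

theorem stmt_10 (ρ α b δ Q M Ainf : ℝ) (hρ : ρ ∈ Set.Ioo (0:ℝ) 1)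
    (hα : α ∈ Set.Ioc (0:ℝ) 1) (hb : 0 < b) (hδ : 0 ≤ δ) (hQ : 0 < Q)
    (hQfix : Q = 1 + ρ * Q / (1 + ρ * Q * (α*(δ+1)^2/b)))
    (hM : M = 2*ρ*Q / (1 - ρ + ρ*Q*(α*(δ+1)^2/b)))
    (hA : Ainf = Ainf / (1 + ρ*Q*(α*(δ+1)^2/b))
      + (2 - ρ*M*(α*(δ+1)^2/b)) / (2 + 2*ρ*Q*(α*(δ+1)^2/b))) :
    (ρ*M*(δ+1) + 2*ρ*(δ+1)*Q*(Ainf + 1)) / (2 + 2*ρ*Q*(α*(δ+1)^2/b))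
      = b / (α*(δ+1)) :=
  stmt_10_general ρ α b δ Q M Ainf hρ hα hb hQ hA
end

section
/- The function v(δ) = ρQ(δ)·(α(δ+1)/b)²·(δ + A₀)/(1-ρ) · (1 - ρ/(1 + ρQ(δ)·α(δ+1)²/b)) is strictly increasing in δ on [0, ∞), where Q(δ) is the unique positive root of ρ(α(δ+1)²/b)Q² + (1-ρ-ρα(δ+1)²/b)Q - 1 = 0; consequently the equation v(δ) = α/b has at most one solution δ ≥ 0. -/
set_option maxHeartbeats 1000000 in
theorem stmt_14 (ρ α b A₀ : ℝ) (hρ : ρ ∈ Set.Ioo (0:ℝ) 1)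
    (hα : α ∈ Set.Ioc (0:ℝ) 1) (hb : 0 < b) (hA₀ : A₀ ∈ Set.Icc (0:ℝ) 1)
    (Q : ℝ → ℝ)
    (hQ : ∀ δ ≥ (0:ℝ), 0 < Q δ ∧
      ρ*(α*(δ+1)^2/b)*(Q δ)^2 + (1 - ρ - ρ*(α*(δ+1)^2/b))*(Q δ) - 1 = 0) :
    let v : ℝ → ℝ := fun δ =>
      ρ * Q δ * (α*(δ+1)/b)^2 * (δ + A₀) / (1-ρ)
        * (1 - ρ / (1 + ρ * Q δ * (α*(δ+1)^2/b)))
    StrictMonoOn v (Set.Ici 0) ∧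
    (∀ δ₁ ∈ Set.Ici (0:ℝ), ∀ δ₂ ∈ Set.Ici (0:ℝ),
      v δ₁ = α/b → v δ₂ = α/b → δ₁ = δ₂) := by
  intro v
  obtain ⟨hρ0, hρ1⟩ := hρ
  obtain ⟨hα0, hα1⟩ := hα
  obtain ⟨hA0, hA1⟩ := hA₀
  have h1ρ : (0:ℝ) < 1 - ρ := by linarith
  have hmono : StrictMonoOn v (Set.Ici 0) := by
    intro δ₁ h₁ δ₂ h₂ h12
    simp only [Set.mem_Ici] at h₁ h₂
    obtain ⟨hQ₁, he₁⟩ := hQ δ₁ h₁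
    obtain ⟨hQ₂, he₂⟩ := hQ δ₂ h₂
    have hvform : ∀ δ x : ℝ, x = ρ * Q δ * (α*(δ+1)^2/b) → 0 < 1 + x →
        v δ = (α/b)/(1-ρ) * ((δ+A₀) * (x*(1+x-ρ)/(1+x))) := by
      intro δ x hx hpos
      have hb' : b ≠ 0 := hb.ne'
      have h1ρ' : (1:ℝ) - ρ ≠ 0 := h1ρ.ne'
      have hab : (α*(δ+1)/b)^2 = (α*(δ+1)^2/b)*(α/b) := by
        field_simp
      show ρ * Q δ * (α*(δ+1)/b)^2 * (δ + A₀) / (1-ρ)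
        * (1 - ρ / (1 + ρ * Q δ * (α*(δ+1)^2/b)))
        = (α/b)/(1-ρ) * ((δ+A₀) * (x*(1+x-ρ)/(1+x)))
      rw [hab,
        show ρ * Q δ * ((α*(δ+1)^2/b)*(α/b)) = x*(α/b) from by rw [hx]; ring,
        ← hx]
      have hpos' : 1 + x ≠ 0 := hpos.ne'
      field_simp
    set c₁ : ℝ := α*(δ₁+1)^2/b with hc₁def
    set c₂ : ℝ := α*(δ₂+1)^2/b with hc₂def
    have hc₁ : 0 < c₁ := by rw [hc₁def]; positivity
    have hc₂ : 0 < c₂ := by rw [hc₂def]; positivity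
    have hcc : c₁ < c₂ := by
      rw [hc₁def, hc₂def, div_lt_div_iff_of_pos_right hb]
      nlinarith [mul_pos hα0 (mul_pos (sub_pos.2 h12) (show (0:ℝ) < δ₂+δ₁+2 by linarith))]
    set x₁ : ℝ := ρ * Q δ₁ * c₁ with hx₁def
    set x₂ : ℝ := ρ * Q δ₂ * c₂ with hx₂def
    have hx₁ : 0 < x₁ := by rw [hx₁def]; positivity
    have hx₂ : 0 < x₂ := by rw [hx₂def]; positivity
    have h1x₁ : (0:ℝ) < 1 + x₁ := by linarith
    have h1x₂ : (0:ℝ) < 1 + x₂ := by linarith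
    have e₁ : x₁^2 + (1-ρ-ρ*c₁)*x₁ - ρ*c₁ = 0 := by
      rw [hx₁def]; linear_combination (ρ*c₁) * he₁
    have e₂ : x₂^2 + (1-ρ-ρ*c₂)*x₂ - ρ*c₂ = 0 := by
      rw [hx₂def]; linear_combination (ρ*c₂) * he₂
    have hv₁ := hvform δ₁ x₁ (by rw [hx₁def, hc₁def]) h1x₁
    have hv₂ := hvform δ₂ x₂ (by rw [hx₂def, hc₂def]) h1x₂
    clear_value c₁ c₂ x₁ x₂
    clear he₁ he₂ hQ hvform hc₁def hc₂def hx₁def hx₂def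
    have hxx : x₁ < x₂ := by
      by_contra hcon
      push_neg at hcon
      have E : (x₁-x₂)*(x₁*x₂+ρ*c₂) + ρ*(c₂-c₁)*(1+x₁)*x₂ = 0 := by
        linear_combination x₂*e₁ - x₁*e₂
      have t1 : 0 ≤ (x₁-x₂)*(x₁*x₂+ρ*c₂) := by
        apply mul_nonneg (by linarith)
        nlinarith [mul_pos hx₁ hx₂, mul_pos hρ0 hc₂]
      have t2 : 0 < ρ*(c₂-c₁)*(1+x₁)*x₂ := by
        apply mul_pos (mul_pos (mul_pos hρ0 (by linarith)) h1x₁) hx₂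
      linarith
    rw [hv₁, hv₂]
    have hfac : (0:ℝ) < (1+x₁)*(1+x₂) - ρ := by nlinarith [mul_pos hx₁ hx₂]
    have hg : x₁*(1+x₁-ρ)/(1+x₁) < x₂*(1+x₂-ρ)/(1+x₂) := by
      rw [div_lt_div_iff₀ h1x₁ h1x₂]
      nlinarith [mul_pos (sub_pos.2 hxx) hfac]
    have hg₁ : 0 < x₁*(1+x₁-ρ)/(1+x₁) :=
      div_pos (mul_pos hx₁ (by linarith)) h1x₁
    have hK : 0 < (α/b)/(1-ρ) := by positivity
    apply mul_lt_mul_of_pos_left ?_ hK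
    calc (δ₁+A₀) * (x₁*(1+x₁-ρ)/(1+x₁))
        ≤ (δ₁+A₀) * (x₂*(1+x₂-ρ)/(1+x₂)) :=
          mul_le_mul_of_nonneg_left hg.le (by linarith)
      _ < (δ₂+A₀) * (x₂*(1+x₂-ρ)/(1+x₂)) :=
          mul_lt_mul_of_pos_right (by linarith) (hg₁.trans hg)
  refine ⟨hmono, fun δ₁ h₁ δ₂ h₂ hv₁ hv₂ => ?_⟩
  exact hmono.injOn h₁ h₂ (hv₁.trans hv₂.symm)
end
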